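/- For the scalar delay characteristic equation with B = 0 and C = d·Id on ℂ (d < 0): if |d|·τ < π/2 then every root z ∈ ℂ of z = d·e^{-zτ} satisfies Re z < 0. -/

import Mathlib

/-!
Suppose a root `z` had `Re z ≥ 0`. Then `|z| = |d| e^{-τ Re z} ≤ |d|`, so `|τ Im z| ≤ |d| τ < π/2`
and `cos (τ Im z) > 0`. Taking real parts of `z = d e^{-zτ}` gives
`Re z = d e^{-τ Re z} cos (τ Im z) < 0`, a contradiction.
-/

namespace Complex

variable {c z : ℂ} {τ : ℝ}

theorem norm_eq_of_eq_mul_exp_neg_mul (hz : z = c * exp (-z * τ)) :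
    ‖z‖ = ‖c‖ * Real.exp (-(z.re * τ)) := by
  conv_lhs => rw [hz]
  simp [norm_exp]

theorem norm_le_of_eq_mul_exp_neg_mul (hτ : 0 ≤ τ) (hre : 0 ≤ z.re)
    (hz : z = c * exp (-z * τ)) : ‖z‖ ≤ ‖c‖ := by
  rw [norm_eq_of_eq_mul_exp_neg_mul hz]
  have : Real.exp (-(z.re * τ)) ≤ 1 := Real.exp_le_one_iff.mpr (by nlinarith)
  exact mul_le_of_le_one_right (norm_nonneg c) this

theorem re_eq_of_eq_ofReal_mul_exp_neg_mul {d : ℝ} (hz : z = d * exp (-z * τ)) :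
    z.re = d * Real.exp (-(z.re * τ)) * Real.cos (z.im * τ) := by
  conv_lhs => rw [hz]
  simp [exp_re, mul_assoc]

end Complex

theorem stmt7 (d τ : ℝ) (hd : d < 0) (hτ : 0 < τ)
    (h : |d| * τ < Real.pi / 2) :
    ∀ z : ℂ, z = (d : ℂ) * Complex.exp (-z * (τ : ℂ)) → z.re < 0 := by
  intro z hz
  by_contra! hre
  have him : |z.im| ≤ |d| := by
    simpa using (z.abs_im_le_norm).trans (Complex.norm_le_of_eq_mul_exp_neg_mul hτ.le hre hz)
  have harg : |z.im * τ| < Real.pi / 2 := by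
    rw [abs_mul, abs_of_pos hτ]
    exact (mul_le_mul_of_nonneg_right him hτ.le).trans_lt h
  have hcos : 0 < Real.cos (z.im * τ) :=
    Real.cos_pos_of_mem_Ioo (abs_lt.mp harg)
  have hneg : d * Real.exp (-(z.re * τ)) * Real.cos (z.im * τ) < 0 :=
    mul_neg_of_neg_of_pos (mul_neg_of_neg_of_pos hd (Real.exp_pos _)) hcos
  rw [← Complex.re_eq_of_eq_ofReal_mul_exp_neg_mul hz] at hneg
  linarith
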